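/- Suppose the domain 𝒫_A satisfies, for each man, the condition that for every woman w there is an admissible preference ranking w first and ∅ second, and satisfies top dominance for women. Then the men-proposing deferred acceptance rule is the unique stable and strategy-proof matching rule on 𝒫_A, and it is moreover group strategy-proof. -/

import Mathlib

/-- A one-to-one matching between men `M` and women `W`; `none` means unmatched. -/
structure Matching (M W : Type*) where
  menMatch : M → Option W
  womenMatch : W → Option M
  consistent : ∀ m w, menMatch m = some w ↔ womenMatch w = some m

/-- A preference profile: each man has a strict linear order over `W ∪ {∅}`
(encoded as `Option W`, with `none` the outside option), and each woman over `M ∪ {∅}`. -/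
structure Profile (M W : Type*) where
  menPref : M → LinearOrder (Option W)
  womenPref : W → LinearOrder (Option M)

variable {M W : Type*}

def IndividuallyRational (μ : Matching M W) (P : Profile M W) : Prop :=
  (∀ m, (P.menPref m).le none (μ.menMatch m)) ∧
  (∀ w, (P.womenPref w).le none (μ.womenMatch w))

def Blocks (m : M) (w : W) (μ : Matching M W) (P : Profile M W) : Prop :=
  (P.menPref m).lt (μ.menMatch m) (some w) ∧
  (P.womenPref w).lt (μ.womenMatch w) (some m)

def Stable (μ : Matching M W) (P : Profile M W) : Prop :=
  IndividuallyRational μ P ∧ ∀ m w, ¬ Blocks m w μ P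

/-- The men-optimal stable matching: stable, and every man weakly prefers it to
any stable matching.  This characterizes the outcome of the men-proposing
deferred acceptance (MPDA) algorithm. -/
def MenOptimalStable (μ : Matching M W) (P : Profile M W) : Prop :=
  Stable μ P ∧
    ∀ ν : Matching M W, Stable ν P → ∀ m, (P.menPref m).le (ν.menMatch m) (μ.menMatch m)

/-- The women-optimal stable matching, i.e. the outcome of women-proposing DA. -/
def WomenOptimalStable (μ : Matching M W) (P : Profile M W) : Prop :=
  Stable μ P ∧
    ∀ ν : Matching M W, Stable ν P → ∀ w, (P.womenPref w).le (ν.womenMatch w) (μ.womenMatch w)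

def Matching.empty (M W : Type*) : Matching M W :=
  ⟨fun _ => none, fun _ => none, by intro m w; simp⟩

/-- The men-proposing deferred acceptance rule `D^M`. -/
noncomputable def mpda (P : Profile M W) : Matching M W :=
  letI := Classical.dec (∃ μ : Matching M W, MenOptimalStable μ P)
  if h : ∃ μ : Matching M W, MenOptimalStable μ P then h.choose else Matching.empty M W

/-- The women-proposing deferred acceptance rule `D^W`. -/
noncomputable def wpda (P : Profile M W) : Matching M W :=
  letI := Classical.dec (∃ μ : Matching M W, WomenOptimalStable μ P)
  if h : ∃ μ : Matching M W, WomenOptimalStable μ P then h.choose else Matching.empty M W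

/-- A domain of preference profiles: a set of admissible preferences for each agent. -/
structure Domain (M W : Type*) where
  men : M → Set (LinearOrder (Option W))
  women : W → Set (LinearOrder (Option M))

/-- Membership of a profile in (the product domain generated by) a domain. -/
def Domain.mem (D : Domain M W) (P : Profile M W) : Prop :=
  (∀ m, P.menPref m ∈ D.men m) ∧ (∀ w, P.womenPref w ∈ D.women w)

def Profile.updateMan [DecidableEq M] (P : Profile M W) (m : M)
    (p : LinearOrder (Option W)) : Profile M W :=
  ⟨Function.update P.menPref m p, P.womenPref⟩

def Profile.updateWoman [DecidableEq W] (P : Profile M W) (w : W)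
    (p : LinearOrder (Option M)) : Profile M W :=
  ⟨P.menPref, Function.update P.womenPref w p⟩

/-- A matching rule is stable on a domain if it selects a stable matching at
every profile of the domain. -/
def StableOn (D : Domain M W) (φ : Profile M W → Matching M W) : Prop :=
  ∀ P, D.mem P → Stable (φ P) P

/-- Strategy-proofness on a domain: no single agent can strictly gain by
misreporting an admissible preference. -/
def StrategyProofOn [DecidableEq M] [DecidableEq W] (D : Domain M W)
    (φ : Profile M W → Matching M W) : Prop :=
  ∀ P, D.mem P →
    (∀ m p, p ∈ D.men m →
      (P.menPref m).le ((φ (P.updateMan m p)).menMatch m) ((φ P).menMatch m)) ∧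
    (∀ w p, p ∈ D.women w →
      (P.womenPref w).le ((φ (P.updateWoman w p)).womenMatch w) ((φ P).womenMatch w))

/-- A coalition `(Sm, Sw)` manipulates `φ` at `P` via the admissible profile `Q`
(which agrees with `P` outside the coalition): every coalition member is
strictly better off at `φ Q` than at `φ P` according to true preferences. -/
def Manipulation (D : Domain M W) (φ : Profile M W → Matching M W)
    (P Q : Profile M W) (Sm : Set M) (Sw : Set W) : Prop :=
  D.mem P ∧ D.mem Q ∧
  (∀ m ∉ Sm, Q.menPref m = P.menPref m) ∧
  (∀ w ∉ Sw, Q.womenPref w = P.womenPref w) ∧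
  (∀ m ∈ Sm, (P.menPref m).lt ((φ P).menMatch m) ((φ Q).menMatch m)) ∧
  (∀ w ∈ Sw, (P.womenPref w).lt ((φ P).womenMatch w) ((φ Q).womenMatch w))

/-- Group strategy-proofness on a domain: no nonempty coalition can manipulate. -/
def GroupStrategyProofOn (D : Domain M W) (φ : Profile M W → Matching M W) : Prop :=
  ¬ ∃ (P Q : Profile M W) (Sm : Set M) (Sw : Set W),
      (Sm.Nonempty ∨ Sw.Nonempty) ∧ Manipulation D φ P Q Sm Sw

/-- Top dominance for women. -/
def TopDominanceWomen (D : Domain M W) : Prop :=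
  ∀ w : W, ∀ x : M, ∀ y z : Option M,
    (∃ P ∈ D.women w, P.lt y (some x) ∧ P.lt z y ∧ P.le none y) →
      ¬ ∃ P' ∈ D.women w, P'.lt z (some x) ∧ P'.lt y z ∧ P'.le none z

/-- Top dominance for men. -/
def TopDominanceMen (D : Domain M W) : Prop :=
  ∀ m : M, ∀ x : W, ∀ y z : Option W,
    (∃ P ∈ D.men m, P.lt y (some x) ∧ P.lt z y ∧ P.le none y) →
      ¬ ∃ P' ∈ D.men m, P'.lt z (some x) ∧ P'.lt y z ∧ P'.le none z

/-- Unrestricted top pairs for men. -/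
def UnrestrictedTopPairsMen (D : Domain M W) : Prop :=
  ∀ m : M,
    (∀ w w' : W, w ≠ w' → ∃ P ∈ D.men m, P.lt (some w') (some w) ∧
        ∀ z : Option W, z ≠ some w → z ≠ some w' → P.lt z (some w')) ∧
    (∀ w : W, ∃ P ∈ D.men m, P.lt none (some w) ∧
        ∀ z : Option W, z ≠ some w → z ≠ none → P.lt z none) ∧
    (∃ P ∈ D.men m, ∀ z : Option W, z ≠ none → P.lt z none)

/-- Unrestricted top pairs for women. -/
def UnrestrictedTopPairsWomen (D : Domain M W) : Prop :=
  ∀ w : W,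
    (∀ m m' : M, m ≠ m' → ∃ P ∈ D.women w, P.lt (some m') (some m) ∧
        ∀ z : Option M, z ≠ some m → z ≠ some m' → P.lt z (some m')) ∧
    (∀ m : M, ∃ P ∈ D.women w, P.lt none (some m) ∧
        ∀ z : Option M, z ≠ some m → z ≠ none → P.lt z none) ∧
    (∃ P ∈ D.women w, ∀ z : Option M, z ≠ none → P.lt z none)

/-- Single-peakedness of a preference over `Option α` with respect to a prior
order `ord` on `α`:  moving away from the peak (the most preferred element of
`α`) on either side makes the preference decline. -/
def SinglePeaked {α : Type*} (ord : LinearOrder α) (P : LinearOrder (Option α)) : Prop :=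
  ∀ peak : α, (∀ a : α, P.le (some a) (some peak)) →
    ∀ a b : α, ((ord.le peak a ∧ ord.lt a b) ∨ (ord.lt b a ∧ ord.le a peak)) →
      P.lt (some b) (some a)

/-- The maximal single-peaked domain with respect to orders on men and women. -/
def maximalSinglePeakedDomain (ordM : LinearOrder M) (ordW : LinearOrder W) : Domain M W :=
  ⟨fun _ => {P | SinglePeaked ordW P}, fun _ => {P | SinglePeaked ordM P}⟩

/-- A domain is single-peaked if all admissible preferences are single-peaked. -/
def Domain.SinglePeakedDomain (D : Domain M W) (ordM : LinearOrder M)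
    (ordW : LinearOrder W) : Prop :=
  (∀ m, ∀ P ∈ D.men m, SinglePeaked ordW P) ∧ (∀ w, ∀ P ∈ D.women w, SinglePeaked ordM P)

/-- Anonymity: all men share the same admissible set, and all women do too. -/
def Domain.Anonymous (D : Domain M W) : Prop :=
  (∀ m m' : M, D.men m = D.men m') ∧ (∀ w w' : W, D.women w = D.women w')

/-- Cyclical inclusion for men. -/
def CyclicalInclusionMen (D : Domain M W) : Prop :=
  ∀ m : M,
    (∃ P ∈ D.men m, ∀ z : Option W, z ≠ none → P.lt z none) ∧
    (∀ w w' : W,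
      (∃ P ∈ D.men m, P.lt (some w') (some w) ∧ P.lt none (some w')) →
      (∃ P ∈ D.men m, P.lt (some w) (some w') ∧ P.lt none (some w)))

/-- Cyclical inclusion for women. -/
def CyclicalInclusionWomen (D : Domain M W) : Prop :=
  ∀ w : W,
    (∃ P ∈ D.women w, ∀ z : Option M, z ≠ none → P.lt z none) ∧
    (∀ m m' : M,
      (∃ P ∈ D.women w, P.lt (some m') (some m) ∧ P.lt none (some m')) →
      (∃ P ∈ D.women w, P.lt (some m) (some m') ∧ P.lt none (some m)))

/-- The unrestricted domain: every strict linear order is admissible. -/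
def fullDomain (M W : Type*) : Domain M W :=
  ⟨fun _ => Set.univ, fun _ => Set.univ⟩



/-!
Men-proposing deferred acceptance, run as rounds of rejections, produces the men-optimal
stable matching. For a coalition manipulating it, two cases arise. If some man gains, the
Blocking Lemma gives a pair blocking the new matching at the true profile whose man does not
gain; that pair must then contain a deviating woman, and she together with her new partner
blocks the old matching. If no man gains, only women deviate, and top dominance forbids a
deviating woman to rank a lower alternative between her new and her old partner, so the old
matching stays stable at the reported profile; men-optimality then forces the new matching to
coincide with the old one. Strategy-proofness is the case of singleton coalitions. For
uniqueness, a stable rule giving man `m` less than his MPDA partner `w` is manipulated by `m`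
reporting `w` first and `∅` second: MPDA then still gives him `w`, and by the rural hospitals
theorem so does every stable matching.
-/

section BundledOrder

variable {α : Type*} (L : LinearOrder α) {a b c : α}

protected theorem LinearOrder.le_of_lt (h : L.lt a b) : L.le a b := letI := L; _root_.le_of_lt h

protected theorem LinearOrder.lt_of_le_of_lt (h₁ : L.le a b) (h₂ : L.lt b c) : L.lt a c :=
  letI := L; _root_.lt_of_le_of_lt h₁ h₂

protected theorem LinearOrder.lt_of_lt_of_le (h₁ : L.lt a b) (h₂ : L.le b c) : L.lt a c :=
  letI := L; _root_.lt_of_lt_of_le h₁ h₂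

protected theorem LinearOrder.lt_trans (h₁ : L.lt a b) (h₂ : L.lt b c) : L.lt a c :=
  letI := L; _root_.lt_trans h₁ h₂

protected theorem LinearOrder.lt_irrefl : ¬ L.lt a a := letI := L; _root_.lt_irrefl a

protected theorem LinearOrder.lt_of_le_of_ne (h₁ : L.le a b) (h₂ : a ≠ b) : L.lt a b :=
  letI := L; _root_.lt_of_le_of_ne h₁ h₂

protected theorem LinearOrder.not_lt : ¬ L.lt a b ↔ L.le b a := letI := L; _root_.not_lt

protected theorem LinearOrder.not_le : ¬ L.le a b ↔ L.lt b a := letI := L; _root_.not_le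

protected theorem LinearOrder.ne_of_lt (h : L.lt a b) : a ≠ b := letI := L; _root_.ne_of_lt h

protected theorem LinearOrder.ne_of_le_of_lt (h₁ : L.le c a) (h₂ : L.lt a b) : b ≠ c :=
  letI := L; (_root_.lt_of_le_of_lt h₁ h₂).ne'

end BundledOrder

section Favorite

variable {α : Type*} [DecidableEq α] (L : LinearOrder (Option α)) {s t : Finset α} {a : α}

def favorite (s : Finset α) : Option α :=
  letI := L; (insert none (s.image some)).max' (Finset.insert_nonempty _ _)

theorem le_favorite (ha : a ∈ s) : L.le (some a) (favorite L s) :=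
  letI := L; Finset.le_max' _ _ (Finset.mem_insert_of_mem (Finset.mem_image_of_mem _ ha))

theorem none_le_favorite (s : Finset α) : L.le none (favorite L s) :=
  letI := L; Finset.le_max' _ _ (Finset.mem_insert_self _ _)

theorem mem_of_favorite_eq_some (h : favorite L s = some a) : a ∈ s := by
  have := letI := L; Finset.max'_mem (insert none (s.image some)) (Finset.insert_nonempty _ _)
  rw [← favorite, h] at this
  simpa using this

theorem favorite_mono (h : s ⊆ t) : L.le (favorite L s) (favorite L t) :=
  letI := L; Finset.max'_subset _ (Finset.insert_subset_insert _ (Finset.image_subset_image h))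

end Favorite

namespace Matching

variable (μ : Matching M W) {m m' : M} {w : W}

theorem ext_menMatch {μ ν : Matching M W} (h : μ.menMatch = ν.menMatch) : μ = ν := by
  obtain ⟨f, g, hg⟩ := μ
  obtain ⟨f', g', hg'⟩ := ν
  obtain rfl : f = f' := h
  obtain rfl : g = g' := funext fun w => Option.ext fun m => by rw [← hg, ← hg']
  rfl

theorem eq_of_menMatch_eq_some (h : μ.menMatch m = some w) (h' : μ.menMatch m' = some w) :
    m = m' :=
  Option.some_injective _ (((μ.consistent m w).1 h).symm.trans ((μ.consistent m' w).1 h'))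

theorem eq_of_menMatch_eq (h : μ.menMatch m = μ.menMatch m') (hm : μ.menMatch m ≠ none) :
    m = m' := by
  obtain ⟨w, hw⟩ := Option.ne_none_iff_exists'.1 hm
  exact μ.eq_of_menMatch_eq_some hw (h ▸ hw)

def matchedMen [Fintype M] : Finset M := Finset.univ.filter fun m => (μ.menMatch m).isSome

def matchedWomen [Fintype W] : Finset W := Finset.univ.filter fun w => (μ.womenMatch w).isSome

theorem mem_matchedMen [Fintype M] : m ∈ μ.matchedMen ↔ μ.menMatch m ≠ none := by
  simp [matchedMen, Option.isSome_iff_ne_none]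

theorem mem_matchedWomen [Fintype W] : w ∈ μ.matchedWomen ↔ μ.womenMatch w ≠ none := by
  simp [matchedWomen, Option.isSome_iff_ne_none]

theorem card_matchedMen [Fintype M] [Fintype W] : μ.matchedMen.card = μ.matchedWomen.card := by
  refine Finset.card_bij' (fun m hm => (μ.menMatch m).get (by simpa [matchedMen] using hm))
    (fun w hw => (μ.womenMatch w).get (by simpa [matchedWomen] using hw)) ?_ ?_ ?_ ?_
  · intro m _
    simp [matchedWomen, (μ.consistent m _).1 (Option.some_get _).symm]
  · intro w _
    simp [matchedMen, (μ.consistent _ w).2 (Option.some_get _).symm]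
  · intro m _
    simp [(μ.consistent m _).1 (Option.some_get _).symm]
  · intro w _
    simp [(μ.consistent _ w).2 (Option.some_get _).symm]

end Matching

section Stability

variable {P : Profile M W} {μ σ : Matching M W} {m : M} {w : W}

theorem Stable.lt_womenMatch_of_lt (hμ : Stable μ P)
    (h : (P.menPref m).lt (μ.menMatch m) (some w)) :
    (P.womenPref w).lt (some m) (μ.womenMatch w) := by
  refine (P.womenPref w).lt_of_le_of_ne ((P.womenPref w).not_lt.1 fun h' => hμ.2 m w ⟨h, h'⟩)
    fun h' => ?_
  rw [(μ.consistent m w).2 h'.symm] at h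
  exact (P.menPref m).lt_irrefl h

theorem MenOptimalStable.unique {ν : Matching M W} (hμ : MenOptimalStable μ P)
    (hν : MenOptimalStable ν P) : μ = ν :=
  Matching.ext_menMatch <| funext fun m =>
    (P.menPref m).le_antisymm _ _ (hν.2 μ hμ.1 m) (hμ.2 ν hν.1 m)

theorem MenOptimalStable.womenMatch_le (hμ : MenOptimalStable μ P) (hσ : Stable σ P) (w : W) :
    (P.womenPref w).le (μ.womenMatch w) (σ.womenMatch w) := by
  refine (P.womenPref w).not_lt.1 fun hlt => ?_
  obtain ⟨m, hm⟩ := Option.ne_none_iff_exists'.1 ((P.womenPref w).ne_of_le_of_lt (hσ.1.2 w) hlt)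
  have hμm := (μ.consistent m w).2 hm
  rw [hm] at hlt
  have hσm : σ.menMatch m ≠ some w := fun h => by
    rw [(σ.consistent m w).1 h] at hlt
    exact (P.womenPref w).lt_irrefl hlt
  have hle := hμ.2 σ hσ m
  rw [hμm] at hle
  exact hσ.2 m w ⟨(P.menPref m).lt_of_le_of_ne hle hσm, hlt⟩

theorem MenOptimalStable.matchedMen_eq [Fintype M] [Fintype W] (hμ : MenOptimalStable μ P)
    (hσ : Stable σ P) : σ.matchedMen = μ.matchedMen := by
  have hmen : σ.matchedMen ⊆ μ.matchedMen := fun m hm => by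
    rw [Matching.mem_matchedMen] at hm ⊢
    exact fun h => hm ((P.menPref m).le_antisymm _ _ (h ▸ hμ.2 σ hσ m) (hσ.1.1 m))
  have hwomen : μ.matchedWomen ⊆ σ.matchedWomen := fun w hw => by
    rw [Matching.mem_matchedWomen] at hw ⊢
    exact fun h => hw ((P.womenPref w).le_antisymm _ _ (h ▸ hμ.womenMatch_le hσ w) (hμ.1.1.2 w))
  refine Finset.eq_of_subset_of_card_le hmen ?_
  rw [Matching.card_matchedMen, Matching.card_matchedMen]
  exact Finset.card_le_card hwomen

end Stability

open scoped Classical in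
def improvers [Fintype M] (P : Profile M W) (μ μ' : Matching M W) : Finset M :=
  Finset.univ.filter fun m => (P.menPref m).lt (μ.menMatch m) (μ'.menMatch m)

section Improvers

variable [Fintype M] {P : Profile M W} {μ μ' : Matching M W} {m : M}

theorem mem_improvers :
    m ∈ improvers P μ μ' ↔ (P.menPref m).lt (μ.menMatch m) (μ'.menMatch m) := by
  simp [improvers]

theorem ne_none_of_mem_improvers (hμ : IndividuallyRational μ P) (hm : m ∈ improvers P μ μ') :
    μ'.menMatch m ≠ none :=
  (P.menPref m).ne_of_le_of_lt (hμ.1 m) (mem_improvers.1 hm)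

theorem Stable.exists_blocks_of_partner_not_improver (hμ : Stable μ P)
    (hIR : IndividuallyRational μ' P) {m' : M} {w : W} (hm' : m' ∈ improvers P μ μ')
    (hw : μ'.menMatch m' = some w) (hno : ∀ m ∈ improvers P μ μ', μ.menMatch m ≠ some w) :
    ∃ m, m ∉ improvers P μ μ' ∧ Blocks m w μ' P := by
  have hμ'w := (μ'.consistent m' w).1 hw
  have hlt := hμ.lt_womenMatch_of_lt (hw ▸ mem_improvers.1 hm')
  have hIRw := hIR.2 w
  rw [hμ'w] at hIRw
  obtain ⟨m, hm⟩ := Option.ne_none_iff_exists'.1 ((P.womenPref w).ne_of_le_of_lt hIRw hlt)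
  have hμm := (μ.consistent m w).2 hm
  have hmI : m ∉ improvers P μ μ' := fun h => hno m h hμm
  refine ⟨m, hmI, (P.menPref m).lt_of_le_of_ne ?_ fun h => ?_, ?_⟩
  · rw [← hμm]
    exact (P.menPref m).not_lt.1 (mt mem_improvers.2 hmI)
  · exact hmI (μ'.eq_of_menMatch_eq_some hw h ▸ hm')
  · rwa [hμ'w, ← hm]

end Improvers

namespace DeferredAcceptance

open Finset
open scoped Classical

variable [Fintype W] (P : Profile M W)

/-- `A m` is the set of women who have rejected `m` so far. -/
noncomputable def proposal (A : M → Finset W) (m : M) : Option W :=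
  favorite (P.menPref m) (A m)ᶜ

variable {P} {A B : M → Finset W} {m : M} {w : W} {s t : ℕ}

theorem le_proposal (h : w ∉ A m) : (P.menPref m).le (some w) (proposal P A m) :=
  le_favorite _ (mem_compl.2 h)

theorem none_le_proposal : (P.menPref m).le none (proposal P A m) := none_le_favorite _ _

theorem notMem_of_proposal_eq (h : proposal P A m = some w) : w ∉ A m :=
  mem_compl.1 (mem_of_favorite_eq_some _ h)

theorem proposal_anti (h : A m ⊆ B m) : (P.menPref m).le (proposal P B m) (proposal P A m) :=
  favorite_mono _ (compl_subset_compl.2 h)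

variable [Fintype M]

variable (P) in
noncomputable def suitors (A : M → Finset W) (w : W) : Finset M :=
  univ.filter fun m => proposal P A m = some w

variable (P) in
noncomputable def held (A : M → Finset W) (w : W) : Option M :=
  favorite (P.womenPref w) (suitors P A w)

variable (P) in
noncomputable def round (A : M → Finset W) (m : M) : Finset W :=
  A m ∪ univ.filter fun w => proposal P A m = some w ∧ held P A w ≠ some m

variable (P) in
noncomputable def rejections (t : ℕ) : M → Finset W := (round P)^[t] ⊥

theorem mem_suitors : m ∈ suitors P A w ↔ proposal P A m = some w := by simp [suitors]

theorem le_held (h : proposal P A m = some w) : (P.womenPref w).le (some m) (held P A w) :=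
  le_favorite _ (mem_suitors.2 h)

theorem none_le_held : (P.womenPref w).le none (held P A w) := none_le_favorite _ _

theorem proposal_eq_of_held (h : held P A w = some m) : proposal P A m = some w :=
  mem_suitors.1 (mem_of_favorite_eq_some _ h)

theorem lt_held_of_rejected (h : proposal P A m = some w) (hr : held P A w ≠ some m) :
    (P.womenPref w).lt (some m) (held P A w) :=
  (P.womenPref w).lt_of_le_of_ne (le_held h) (Ne.symm hr)

theorem mem_round :
    w ∈ round P A m ↔ w ∈ A m ∨ (proposal P A m = some w ∧ held P A w ≠ some m) := by
  simp [round]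

theorem proposal_round_of_held (h : held P A w = some m) :
    proposal P (round P A) m = some w := by
  have hround : round P A m = A m := union_eq_left.2 fun w' hw' => by
    simp only [mem_filter, mem_univ, true_and, proposal_eq_of_held h, Option.some_inj] at hw'
    exact absurd (hw'.1 ▸ h) hw'.2
  rw [proposal, hround]
  exact proposal_eq_of_held h

theorem held_le_held_round : (P.womenPref w).le (held P A w) (held P (round P A) w) := by
  cases h : held P A w with
  | none => exact none_le_held
  | some m => exact le_held (proposal_round_of_held h)

theorem rejections_succ (t : ℕ) : rejections P (t + 1) = round P (rejections P t) :=
  Function.iterate_succ_apply' _ _ _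

theorem rejections_mono : Monotone (rejections P) :=
  monotone_nat_of_le_succ fun t m => by
    rw [rejections_succ]
    exact subset_union_left

theorem proposal_rejections_anti (h : s ≤ t) :
    (P.menPref m).le (proposal P (rejections P t) m) (proposal P (rejections P s) m) :=
  proposal_anti (rejections_mono h m)

theorem held_rejections_mono (h : s ≤ t) :
    (P.womenPref w).le (held P (rejections P s) w) (held P (rejections P t) w) :=
  letI := P.womenPref w
  monotone_nat_of_le_succ (f := fun t => held P (rejections P t) w)
    (fun t => by simp only [rejections_succ]; exact held_le_held_round) h

theorem exists_rejection_of_mem (h : w ∈ rejections P t m) :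
    ∃ s < t, proposal P (rejections P s) m = some w ∧ held P (rejections P s) w ≠ some m := by
  induction t with
  | zero => simp [rejections] at h
  | succ t ih =>
    rw [rejections_succ, mem_round] at h
    rcases h with h | h
    · obtain ⟨s, hs, hs'⟩ := ih h
      exact ⟨s, hs.trans t.lt_succ_self, hs'⟩
    · exact ⟨t, t.lt_succ_self, h⟩

theorem lt_held_of_mem_rejections (h : w ∈ rejections P t m) :
    (P.womenPref w).lt (some m) (held P (rejections P t) w) := by
  obtain ⟨s, hs, hp, hr⟩ := exists_rejection_of_mem h
  exact (P.womenPref w).lt_of_lt_of_le (lt_held_of_rejected hp hr) (held_rejections_mono hs.le)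

variable (P)

theorem exists_rejections_eq : ∃ N, ∀ t, N ≤ t → rejections P N = rejections P t :=
  WellFoundedGT.monotone_chain_condition ⟨rejections P, rejections_mono⟩

noncomputable def stopRound : ℕ := Nat.find (exists_rejections_eq P)

noncomputable def finalRejections : M → Finset W := rejections P (stopRound P)

theorem rejections_le_final (t : ℕ) : rejections P t ≤ finalRejections P := by
  rcases le_total t (stopRound P) with h | h
  · exact rejections_mono h
  · exact (Nat.find_spec (exists_rejections_eq P) t h).ge

theorem round_final : round P (finalRejections P) = finalRejections P :=
  (rejections_succ _).symm.trans (Nat.find_spec (exists_rejections_eq P) _ (Nat.le_succ _)).symm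

variable {P}

theorem held_final_eq_some_iff :
    held P (finalRejections P) w = some m ↔ proposal P (finalRejections P) m = some w := by
  refine ⟨proposal_eq_of_held, fun h => by_contra fun hr => notMem_of_proposal_eq h ?_⟩
  rw [← round_final, mem_round]
  exact Or.inr ⟨h, hr⟩

variable (P)

noncomputable def matching : Matching M W where
  menMatch := proposal P (finalRejections P)
  womenMatch := held P (finalRejections P)
  consistent _ _ := held_final_eq_some_iff.symm

variable {P}

theorem mem_final_of_lt (h : (P.menPref m).lt (proposal P (finalRejections P) m) (some w)) :
    w ∈ finalRejections P m :=
  by_contra fun hw => (P.menPref m).not_le.2 h (le_proposal hw)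

theorem matching_stable : Stable (matching P) P :=
  ⟨⟨fun _ => none_le_proposal, fun _ => none_le_held⟩, fun _ _ ⟨hm, hw⟩ =>
    (P.womenPref _).not_lt.2 ((P.womenPref _).le_of_lt hw)
      (lt_held_of_mem_rejections (mem_final_of_lt hm))⟩

theorem notMem_rejections_of_stable {ν : Matching M W} (hν : Stable ν P) :
    ∀ {m w}, ν.menMatch m = some w → w ∉ rejections P t m := by
  induction t with
  | zero => simp [rejections]
  | succ t ih =>
    intro m w hνm hmem
    rw [rejections_succ, mem_round] at hmem
    rcases hmem with h | ⟨hp, hr⟩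
    · exact ih hνm h
    have hνw := (ν.consistent m w).1 hνm
    have hlt := lt_held_of_rejected hp hr
    cases hm' : held P (rejections P t) w with
    | none =>
      rw [hm'] at hlt
      have hIR := hν.1.2 w
      rw [hνw] at hIR
      exact (P.womenPref w).not_le.2 hlt hIR
    | some m' =>
      -- `w` held `m'` over `m`, and `m'`, never rejected by his `ν`-partner, prefers `w` to it
      rw [hm'] at hlt
      have hp' := proposal_eq_of_held hm'
      refine hν.2 m' w ⟨(P.menPref m').lt_of_le_of_ne ?_ fun h => ?_, hνw ▸ hlt⟩
      · cases h' : ν.menMatch m' with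
        | none => exact hp' ▸ none_le_proposal
        | some w' => exact hp' ▸ le_proposal (ih h')
      · exact (P.womenPref w).ne_of_lt hlt (congrArg some (ν.eq_of_menMatch_eq_some hνm h))

theorem matching_menOptimalStable : MenOptimalStable (matching P) P := by
  refine ⟨matching_stable, fun ν hν m => ?_⟩
  cases h : ν.menMatch m with
  | none => exact none_le_proposal
  | some w => exact le_proposal (notMem_rejections_of_stable hν h)

theorem proposal_eq_final_of_le
    (h : proposal P (rejections P s) m = proposal P (finalRejections P) m) (hst : s ≤ t) :
    proposal P (rejections P t) m = proposal P (finalRejections P) m :=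
  (P.menPref m).le_antisymm _ _ (h ▸ proposal_rejections_anti hst)
    (proposal_anti (rejections_le_final P t m))

theorem lt_of_rejected (hp : proposal P (rejections P s) m = some w)
    (hr : held P (rejections P s) w ≠ some m)
    (ht : proposal P (rejections P t) m = proposal P (finalRejections P) m) : s < t := by
  by_contra! hts
  have hw : w ∈ finalRejections P m := by
    refine rejections_le_final P (s + 1) m ?_
    rw [rejections_succ, mem_round]
    exact Or.inr ⟨hp, hr⟩
  exact notMem_of_proposal_eq ((proposal_eq_final_of_le ht hts).symm.trans hp) hw

theorem exists_blocks_of_partners_mem {μ' : Matching M W} (hIR : IndividuallyRational μ' P)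
    (hne : (improvers P (matching P) μ').Nonempty)
    (hpart : ∀ m ∈ improvers P (matching P) μ', ∃ m' ∈ improvers P (matching P) μ',
      μ'.menMatch m' = (matching P).menMatch m) :
    ∃ m w m', m ∉ improvers P (matching P) μ' ∧ m' ∈ improvers P (matching P) μ' ∧
      μ'.menMatch m' = some w ∧ Blocks m w μ' P := by
  set μ := matching P
  set I := improvers P μ μ'
  have hfin : ∀ m, ∃ t, proposal P (rejections P t) m = μ.menMatch m :=
    fun m => ⟨stopRound P, rfl⟩
  -- the last round `T` in which a man `mT` of `I` first proposes to his final partner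
  obtain ⟨mT, hmT, hmax⟩ := I.exists_max_image (fun m => Nat.find (hfin m)) hne
  set T := Nat.find (hfin mT)
  obtain ⟨m', hm', hm'T⟩ := hpart mT hmT
  obtain ⟨w, hw⟩ := Option.ne_none_iff_exists'.1 (ne_none_of_mem_improvers matching_stable.1 hm')
  have hμmT : μ.menMatch mT = some w := hm'T ▸ hw
  obtain ⟨s, -, hs, hsr⟩ := exists_rejection_of_mem (mem_final_of_lt (hw ▸ mem_improvers.1 hm'))
  have hsT : s < T :=
    (lt_of_rejected hs hsr (Nat.find_spec (hfin m'))).trans_le (hmax m' hm')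
  obtain ⟨T', hT'⟩ := Nat.exists_eq_add_one_of_ne_zero (Nat.ne_zero_of_lt hsT)
  -- just before round `T`, `w` holds a man `m₀` she prefers to `m'`
  have hlt : (P.womenPref w).lt (some m') (held P (rejections P T') w) :=
    (P.womenPref w).lt_of_lt_of_le (lt_held_of_rejected hs hsr)
      (held_rejections_mono (by omega))
  have hIRw := hIR.2 w
  rw [(μ'.consistent m' w).1 hw] at hIRw
  obtain ⟨m₀, hm₀⟩ := Option.ne_none_iff_exists'.1 ((P.womenPref w).ne_of_le_of_lt hIRw hlt)
  have hp₀ : proposal P (rejections P T') m₀ = some w := proposal_eq_of_held hm₀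
  have hμm₀ : μ.menMatch m₀ ≠ some w := fun h => by
    obtain rfl := μ.eq_of_menMatch_eq_some h hμmT
    exact Nat.find_min (hfin m₀) (show T' < Nat.find (hfin m₀) by omega) (hp₀.trans h.symm)
  have hm₀I : m₀ ∉ I := fun h => hμm₀ <| by
    change proposal P (finalRejections P) m₀ = some w
    rw [← proposal_eq_final_of_le (Nat.find_spec (hfin m₀)) ((hmax m₀ h).trans hT'.le),
      rejections_succ]
    exact proposal_round_of_held hm₀
  refine ⟨m₀, w, m', hm₀I, hm', hw, ?_, ?_⟩
  · refine (P.menPref m₀).lt_of_le_of_lt ((P.menPref m₀).not_lt.1 (mt mem_improvers.2 hm₀I))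
      ((P.menPref m₀).lt_of_le_of_ne ?_ hμm₀)
    exact hp₀ ▸ proposal_anti (rejections_le_final P T' m₀)
  · rwa [(μ'.consistent m' w).1 hw, ← hm₀]

end DeferredAcceptance

section MPDA

variable [Fintype M] [Fintype W]

theorem mpda_menOptimalStable (P : Profile M W) : MenOptimalStable (mpda P) P := by
  have h : ∃ μ : Matching M W, MenOptimalStable μ P :=
    ⟨_, DeferredAcceptance.matching_menOptimalStable⟩
  rw [mpda, dif_pos h]
  exact h.choose_spec

theorem mpda_stableOn (D : Domain M W) : StableOn D mpda :=
  fun P _ => (mpda_menOptimalStable P).1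

/-- The Blocking Lemma of Gale and Sotomayor. -/
theorem MenOptimalStable.exists_blocks {P : Profile M W} {μ μ' : Matching M W}
    (hμ : MenOptimalStable μ P) (hIR : IndividuallyRational μ' P)
    (hne : (improvers P μ μ').Nonempty) :
    ∃ m w m', m ∉ improvers P μ μ' ∧ m' ∈ improvers P μ μ' ∧ μ'.menMatch m' = some w ∧
      Blocks m w μ' P := by
  classical
  obtain rfl := hμ.unique DeferredAcceptance.matching_menOptimalStable
  set I := improvers P (DeferredAcceptance.matching P) μ'
  by_cases h : ∀ m' ∈ I, ∃ m ∈ I, (DeferredAcceptance.matching P).menMatch m = μ'.menMatch m'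
  · refine DeferredAcceptance.exists_blocks_of_partners_mem hIR hne fun m hm => ?_
    -- `μ'` is injective on `I`, so the inclusion of `μ'`-partners in `μ`-partners is an equality
    have hsub : I.image μ'.menMatch ⊆ I.image (DeferredAcceptance.matching P).menMatch :=
      fun o ho => by
        obtain ⟨m', hm', rfl⟩ := Finset.mem_image.1 ho
        obtain ⟨m, hm, hmm'⟩ := h m' hm'
        exact Finset.mem_image.2 ⟨m, hm, hmm'⟩
    have heq := Finset.eq_of_subset_of_card_le hsub <| by
      rw [Finset.card_image_of_injOn fun a ha b _ hab =>
        μ'.eq_of_menMatch_eq hab (ne_none_of_mem_improvers hμ.1.1 ha)]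
      exact Finset.card_image_le
    have hmem := Finset.mem_image_of_mem (DeferredAcceptance.matching P).menMatch hm
    rw [← heq, Finset.mem_image] at hmem
    exact hmem
  · push Not at h
    obtain ⟨m', hm', hno⟩ := h
    obtain ⟨w, hw⟩ := Option.ne_none_iff_exists'.1 (ne_none_of_mem_improvers hμ.1.1 hm')
    obtain ⟨m, hm, hb⟩ := hμ.1.exists_blocks_of_partner_not_improver hIR hm' hw
      fun m hm => hw ▸ hno m hm
    exact ⟨m, w, m', hm, hm', hw, hb⟩

end MPDA

theorem TopDominanceWomen.not_swap {D : Domain M W} (hTD : TopDominanceWomen D) {w : W}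
    {p q : LinearOrder (Option M)} (hp : p ∈ D.women w) (hq : q ∈ D.women w) {x : M}
    {y z : Option M} (hpy : p.lt y (some x)) (hpz : p.lt z y) (hpy₀ : p.le none y)
    (hqz : q.lt z (some x)) (hqy : q.lt y z) (hqx : q.lt none (some x)) : False := by
  by_cases hqz₀ : q.le none z
  · exact hTD w x y z ⟨p, hp, hpy, hpz, hpy₀⟩ ⟨q, hq, hqz, hqy, hqz₀⟩
  · -- then `q` ranks `y` below `∅`, so `∅` can play the role of `z`
    have hqy₀ : q.lt y none := q.lt_trans hqy (q.not_le.1 hqz₀)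
    have hpy₀' : p.lt none y := p.lt_of_le_of_ne hpy₀ (q.ne_of_lt hqy₀).symm
    exact hTD w x y none ⟨p, hp, hpy, hpy₀', hpy₀⟩ ⟨q, hq, hqx, hqy₀, q.le_refl _⟩

section Manipulation

variable {D : Domain M W} {P Q : Profile M W} {Sm : Set M} {Sw : Set W}

theorem Manipulation.individuallyRational {φ : Profile M W → Matching M W}
    (hφ : StableOn D φ) (h : Manipulation D φ P Q Sm Sw) : IndividuallyRational (φ Q) P := by
  obtain ⟨hP, hQ, hQm, hQw, hgm, hgw⟩ := h
  refine ⟨fun m => ?_, fun w => ?_⟩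
  · by_cases hm : m ∈ Sm
    · exact (P.menPref m).le_trans _ _ _ ((hφ P hP).1.1 m) ((P.menPref m).le_of_lt (hgm m hm))
    · exact hQm m hm ▸ (hφ Q hQ).1.1 m
  · by_cases hw : w ∈ Sw
    · exact (P.womenPref w).le_trans _ _ _ ((hφ P hP).1.2 w)
        ((P.womenPref w).le_of_lt (hgw w hw))
    · exact hQw w hw ▸ (hφ Q hQ).1.2 w

variable [Fintype M] [Fintype W]

theorem Manipulation.mpda_menMatch_le (h : Manipulation D mpda P Q Sm Sw) (m : M) :
    (P.menPref m).le ((mpda Q).menMatch m) ((mpda P).menMatch m) := by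
  refine (P.menPref m).not_lt.1 fun hm => ?_
  obtain ⟨m, w, m', hm, hm', hw, hb⟩ := (mpda_menOptimalStable P).exists_blocks
    (h.individuallyRational (mpda_stableOn D)) ⟨m, mem_improvers.2 hm⟩
  obtain ⟨-, -, hQm, hQw, hgm, hgw⟩ := h
  have hmS : m ∉ Sm := fun hS => hm (mem_improvers.2 (hgm m hS))
  -- the pair blocks `mpda Q` at `P`, so `w` must have deviated, and then `m'` and `w` block `mpda P`
  have hwS : w ∈ Sw := by
    by_contra hwS
    refine (mpda_menOptimalStable Q).1.2 m w ?_
    rwa [Blocks, hQm m hmS, hQw w hwS]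
  have hgain := hgw w hwS
  rw [((mpda Q).consistent m' w).1 hw] at hgain
  exact (mpda_menOptimalStable P).1.2 m' w ⟨hw ▸ mem_improvers.1 hm', hgain⟩

theorem Manipulation.notMem_men (h : Manipulation D mpda P Q Sm Sw) (m : M) : m ∉ Sm := by
  have hle := h.mpda_menMatch_le m
  obtain ⟨-, -, -, -, hgm, -⟩ := h
  exact fun hm => (P.menPref m).not_le.2 (hgm m hm) hle

theorem Manipulation.stable_mpda (hTD : TopDominanceWomen D)
    (h : Manipulation D mpda P Q Sm Sw) : Stable (mpda P) Q := by
  have hle := h.mpda_menMatch_le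
  have hSm := h.notMem_men
  obtain ⟨hP, hQ, hQm', hQw, -, hgw⟩ := h
  have hQm : ∀ m, Q.menPref m = P.menPref m := fun m => hQm' m (hSm m)
  have hμ := mpda_menOptimalStable P
  have hν := mpda_menOptimalStable Q
  have hpartner : ∀ w ∈ Sw, ∃ x, (mpda Q).womenMatch w = some x ∧
      (Q.womenPref w).lt none (some x) ∧ (P.womenPref w).lt ((mpda P).womenMatch w) (some x) := by
    intro w hw
    obtain ⟨x, hx⟩ := Option.ne_none_iff_exists'.1
      ((P.womenPref w).ne_of_le_of_lt (hμ.1.1.2 w) (hgw w hw))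
    have hIR := hν.1.1.2 w
    rw [hx] at hIR
    exact ⟨x, hx, (Q.womenPref w).lt_of_le_of_ne hIR (Option.some_ne_none x).symm, hx ▸ hgw w hw⟩
  refine ⟨⟨fun m => hQm m ▸ hμ.1.1.1 m, fun w => ?_⟩, fun m w ⟨hbm, hbw⟩ => ?_⟩
  · by_cases hw : w ∈ Sw
    · obtain ⟨x, -, hx₀, hgx⟩ := hpartner w hw
      refine (Q.womenPref w).not_lt.1 fun hy => hTD.not_swap (hP.2 w) (hQ.2 w) hgx ?_
        (hμ.1.1.2 w) hx₀ hy hx₀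
      exact (P.womenPref w).lt_of_le_of_ne (hμ.1.1.2 w) fun h => (Q.womenPref w).lt_irrefl (h ▸ hy)
    · exact hQw w hw ▸ hμ.1.1.2 w
  · rw [hQm m] at hbm
    by_cases hw : w ∈ Sw
    · obtain ⟨x, hx, hx₀, hgx⟩ := hpartner w hw
      have hνm := (P.menPref m).lt_of_le_of_lt (hle m) hbm
      rw [← hQm m] at hνm
      have hmx := hν.1.lt_womenMatch_of_lt hνm
      rw [hx] at hmx
      exact hTD.not_swap (hP.2 w) (hQ.2 w) hgx (hμ.1.lt_womenMatch_of_lt hbm) (hμ.1.1.2 w) hmx hbw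
        hx₀
    · exact hμ.1.2 m w ⟨hbm, hQw w hw ▸ hbw⟩

end Manipulation

theorem mpda_groupStrategyProofOn [Fintype M] [Fintype W] {D : Domain M W}
    (hTD : TopDominanceWomen D) : GroupStrategyProofOn D mpda := by
  rintro ⟨P, Q, Sm, Sw, hS, h⟩
  have hle := h.mpda_menMatch_le
  have hSm := h.notMem_men
  have hμQ := h.stable_mpda hTD
  obtain ⟨-, -, hQm, -, -, hgw⟩ := h
  -- `mpda P` is stable at `Q`, so men-optimality at `Q` makes `mpda Q` at least as good for men
  have heq : mpda Q = mpda P := Matching.ext_menMatch <| funext fun m =>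
    (P.menPref m).le_antisymm _ _ (hle m)
      (hQm m (hSm m) ▸ (mpda_menOptimalStable Q).2 _ hμQ m)
  obtain ⟨w, hw⟩ := hS.resolve_left fun ⟨m, hm⟩ => hSm m hm
  exact (P.womenPref w).lt_irrefl (heq ▸ hgw w hw)

section SingleDeviation

variable {D : Domain M W} {P : Profile M W}

theorem Profile.updateMan_menPref_self [DecidableEq M] (m : M) (p : LinearOrder (Option W)) :
    (P.updateMan m p).menPref m = p :=
  Function.update_self _ _ _

theorem Profile.updateMan_menPref_of_ne [DecidableEq M] {m m' : M} (h : m' ≠ m)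
    (p : LinearOrder (Option W)) : (P.updateMan m p).menPref m' = P.menPref m' :=
  Function.update_of_ne h _ _

theorem Profile.updateWoman_womenPref_self [DecidableEq W] (w : W) (p : LinearOrder (Option M)) :
    (P.updateWoman w p).womenPref w = p :=
  Function.update_self _ _ _

theorem Profile.updateWoman_womenPref_of_ne [DecidableEq W] {w w' : W} (h : w' ≠ w)
    (p : LinearOrder (Option M)) : (P.updateWoman w p).womenPref w' = P.womenPref w' :=
  Function.update_of_ne h _ _

theorem Domain.mem_updateMan [DecidableEq M] (hP : D.mem P) {m : M} {p : LinearOrder (Option W)}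
    (hp : p ∈ D.men m) : D.mem (P.updateMan m p) := by
  refine ⟨fun m' => ?_, hP.2⟩
  by_cases h : m' = m
  · rw [h, Profile.updateMan_menPref_self]
    exact hp
  · rw [Profile.updateMan_menPref_of_ne h]
    exact hP.1 m'

theorem Domain.mem_updateWoman [DecidableEq W] (hP : D.mem P) {w : W}
    {p : LinearOrder (Option M)} (hp : p ∈ D.women w) : D.mem (P.updateWoman w p) := by
  refine ⟨hP.1, fun w' => ?_⟩
  by_cases h : w' = w
  · rw [h, Profile.updateWoman_womenPref_self]
    exact hp
  · rw [Profile.updateWoman_womenPref_of_ne h]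
    exact hP.2 w'

theorem GroupStrategyProofOn.strategyProofOn [DecidableEq M] [DecidableEq W]
    {φ : Profile M W → Matching M W} (h : GroupStrategyProofOn D φ) : StrategyProofOn D φ := by
  refine fun P hP => ⟨fun m p hp => (P.menPref m).not_lt.1 fun hlt => h ?_,
    fun w p hp => (P.womenPref w).not_lt.1 fun hlt => h ?_⟩
  · refine ⟨P, P.updateMan m p, {m}, ∅, Or.inl (Set.singleton_nonempty m), hP,
      Domain.mem_updateMan hP hp, fun m' hm' => Profile.updateMan_menPref_of_ne hm' p,
      fun _ _ => rfl, fun m' hm' => ?_, fun _ hw => absurd hw (Set.notMem_empty _)⟩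
    rwa [Set.mem_singleton_iff.1 hm']
  · refine ⟨P, P.updateWoman w p, ∅, {w}, Or.inr (Set.singleton_nonempty w), hP,
      Domain.mem_updateWoman hP hp, fun _ _ => rfl,
      fun w' hw' => Profile.updateWoman_womenPref_of_ne hw' p,
      fun _ hm => absurd hm (Set.notMem_empty _), fun w' hw' => ?_⟩
    rwa [Set.mem_singleton_iff.1 hw']

theorem Stable.updateMan_of_le_top [DecidableEq M] {μ : Matching M W} (hμ : Stable μ P) {m : M}
    {w : W} (hw : μ.menMatch m = some w) {p : LinearOrder (Option W)}
    (htop : ∀ z, p.le z (some w)) : Stable μ (P.updateMan m p) := by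
  refine ⟨⟨fun m' => ?_, hμ.1.2⟩, fun m' w' hb => ?_⟩
  · by_cases h : m' = m
    · rw [h, Profile.updateMan_menPref_self, hw]
      exact htop none
    · rw [Profile.updateMan_menPref_of_ne h]
      exact hμ.1.1 m'
  · obtain ⟨hbm, hbw⟩ := hb
    by_cases h : m' = m
    · rw [h, Profile.updateMan_menPref_self, hw] at hbm
      exact p.not_le.2 hbm (htop _)
    · rw [Profile.updateMan_menPref_of_ne h] at hbm
      exact hμ.2 m' w' ⟨hbm, hbw⟩

end SingleDeviation

theorem Stable.menMatch_eq_of_updateMan_top [Fintype M] [Fintype W] [DecidableEq M]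
    {P : Profile M W} {μ σ : Matching M W} (hμ : Stable μ P) {m : M} {w : W}
    (hw : μ.menMatch m = some w) {p : LinearOrder (Option W)} (hp₀ : p.lt none (some w))
    (hpz : ∀ z : Option W, z ≠ some w → z ≠ none → p.lt z none)
    (hσ : Stable σ (P.updateMan m p)) : σ.menMatch m = some w := by
  have hptop : ∀ z, p.le z (some w) := fun z => by
    by_cases hz : z = some w
    · exact hz ▸ p.le_refl _
    by_cases hz₀ : z = none
    · exact hz₀ ▸ p.le_of_lt hp₀
    · exact p.le_of_lt (p.lt_trans (hpz z hz hz₀) hp₀)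
  have hpref : (P.updateMan m p).menPref m = p := Profile.updateMan_menPref_self m p
  have hν := mpda_menOptimalStable (P.updateMan m p)
  have hνm : (mpda (P.updateMan m p)).menMatch m = some w := by
    have := hν.2 _ (hμ.updateMan_of_le_top hw hptop) m
    rw [hpref, hw] at this
    exact p.le_antisymm _ _ (hptop _) this
  -- by the rural hospitals theorem `σ` matches `m`, and `w` is the only woman acceptable under `p`
  have hmatched : m ∈ σ.matchedMen := by
    rw [hν.matchedMen_eq hσ, Matching.mem_matchedMen, hνm]
    exact Option.some_ne_none w
  rw [Matching.mem_matchedMen] at hmatched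
  have hIR := hσ.1.1 m
  rw [hpref] at hIR
  exact by_contra fun h => p.not_le.2 (hpz _ h hmatched) hIR

theorem eq_mpda_of_stableOn_of_strategyProofOn [Fintype M] [Fintype W] [DecidableEq M]
    [DecidableEq W] {D : Domain M W}
    (htop : ∀ m : M, ∀ w : W, ∃ p ∈ D.men m, p.lt none (some w) ∧
      ∀ z : Option W, z ≠ some w → z ≠ none → p.lt z none)
    {φ : Profile M W → Matching M W} (hst : StableOn D φ) (hsp : StrategyProofOn D φ)
    {P : Profile M W} (hP : D.mem P) : φ P = mpda P := by
  refine Matching.ext_menMatch <| funext fun m => by_contra fun hne => ?_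
  have hμ := mpda_menOptimalStable P
  have hlt := (P.menPref m).lt_of_le_of_ne (hμ.2 _ (hst P hP) m) hne
  obtain ⟨w, hw⟩ :=
    Option.ne_none_iff_exists'.1 ((P.menPref m).ne_of_le_of_lt ((hst P hP).1.1 m) hlt)
  obtain ⟨p, hpD, hp₀, hpz⟩ := htop m w
  have hgain := (hsp P hP).1 m p hpD
  rw [hμ.1.menMatch_eq_of_updateMan_top hw hp₀ hpz (hst _ (Domain.mem_updateMan hP hpD)),
    ← hw] at hgain
  exact (P.menPref m).not_le.2 hlt hgain

/-- if for each man every woman can be ranked first with the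
outside option second, and the domain satisfies top dominance for women, then
MPDA is the unique stable and strategy-proof rule on the domain, and it is
moreover group strategy-proof. -/
theorem mpda_unique_stable_sp_and_gsp [Fintype M] [Fintype W]
    [DecidableEq M] [DecidableEq W] (D : Domain M W)
    (htop : ∀ m : M, ∀ w : W, ∃ P ∈ D.men m, P.lt none (some w) ∧
        ∀ z : Option W, z ≠ some w → z ≠ none → P.lt z none)
    (hTD : TopDominanceWomen D) :
    (StableOn D mpda ∧ StrategyProofOn D mpda ∧ GroupStrategyProofOn D mpda) ∧
    (∀ phi : Profile M W → Matching M W, StableOn D phi → StrategyProofOn D phi →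
      ∀ P : Profile M W, D.mem P → phi P = mpda P) :=
  ⟨⟨mpda_stableOn D, (mpda_groupStrategyProofOn hTD).strategyProofOn,
      mpda_groupStrategyProofOn hTD⟩,
    fun _ hst hsp _ hP => eq_mpda_of_stableOn_of_strategyProofOn htop hst hsp hP⟩
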